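/- arXiv:2007.15918 — 3 statements merged into one kernel-verified Lean document; each statement's English description precedes it below -/
import Mathlib

section
/- Let T > 0, τ ∈ (0, T), and a, b > 0. Suppose y : [0, T) → [0, ∞) is absolutely continuous and satisfies y'(t) + a·y(t) ≤ h(t) for almost every t ∈ (0, T), where h : [0, T) → [0, ∞) is nonnegative, locally integrable, and satisfies ∫_t^{t+τ} h(s) ds ≤ b for all t ∈ [0, T − τ). Then y(t) ≤ max{ y(0) + b , b/(aτ) + 2b } for all t ∈ [0, T). -/
/-!
Let `M` be the claimed bound and let `s₁` be the last time in `[0, t]` at which `y ≤ M - b`.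
On `(s₁, t]` we have `y > M - b ≥ b / (aτ) + b`, so integrating `y' ≤ h - a y` over a window of
length at most `τ` ending in `(s₁, t]` shows: within `τ` of `s₁`, `y` exceeds `y s₁ ≤ M - b` by at
most `∫ h ≤ b`; further out, the absorption `a ∫ y ≥ aτ (M - b) ≥ b` beats the forcing, so
`y u ≤ y (u - τ)`. Stepping back by `τ` finitely often gives `y ≤ M` on `(s₁, t]`.
-/

open MeasureTheory Set intervalIntegral

theorem MeasureTheory.LocallyIntegrableOn.intervalIntegrable {E : Type*} [NormedAddCommGroup E]
    {μ : Measure ℝ} {f : ℝ → E} {s : Set ℝ} {a b : ℝ} (hf : LocallyIntegrableOn f s μ)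
    (hab : uIcc a b ⊆ s) : IntervalIntegrable f μ a b :=
  (hf.integrableOn_compact_subset hab isCompact_uIcc).intervalIntegrable

theorem continuousOn_Icc_of_eq_add_integral {E : Type*} [NormedAddCommGroup E] [NormedSpace ℝ E]
    {y y' : ℝ → E} {a c : ℝ} (hy' : IntervalIntegrable y' volume a c)
    (hy : ∀ t ∈ Icc a c, y t = y a + ∫ u in a..t, y' u) : ContinuousOn y (Icc a c) :=
  (continuousOn_const.add
    ((continuousOn_primitive_interval' hy' left_mem_uIcc).mono Icc_subset_uIcc)).congr hy

theorem ContinuousOn.exists_mem_Icc_forall_Ioc_lt {α β : Type*}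
    [ConditionallyCompleteLinearOrder α] [TopologicalSpace α] [OrderTopology α]
    [LinearOrder β] [TopologicalSpace β] [ClosedIicTopology β]
    {f : α → β} {a c : α} {L : β} (hf : ContinuousOn f (Icc a c)) (hac : a ≤ c) (ha : f a ≤ L) :
    ∃ s ∈ Icc a c, f s ≤ L ∧ ∀ u ∈ Ioc s c, L < f u := by
  have hS : IsCompact (Icc a c ∩ f ⁻¹' Iic L) :=
    isCompact_Icc.of_isClosed_subset
      (hf.preimage_isClosed_of_isClosed isClosed_Icc isClosed_Iic) inter_subset_left
  obtain ⟨s, ⟨hs, hfs⟩, hmax⟩ := hS.exists_isGreatest ⟨a, left_mem_Icc.2 hac, ha⟩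
  refine ⟨s, hs, hfs, fun u hu => ?_⟩
  by_contra! hfu
  exact (hmax ⟨⟨hs.1.trans hu.1.le, hu.2⟩, hfu⟩).not_gt hu.1

theorem forall_mem_Ioc_le_of_le_shift {β : Type*} [Preorder β] {f : ℝ → β} {s c τ : ℝ} {M : β}
    (hτ : 0 < τ)
    (hbase : ∀ t ∈ Ioc s c, t ≤ s + τ → f t ≤ M)
    (hshift : ∀ t ∈ Ioc s c, s + τ < t → f t ≤ f (t - τ)) :
    ∀ t ∈ Ioc s c, f t ≤ M := by
  suffices H : ∀ n : ℕ, ∀ t ∈ Ioc s c, t ≤ s + n * τ → f t ≤ M by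
    intro t ht
    obtain ⟨n, hn⟩ := exists_nat_ge ((t - s) / τ)
    rw [div_le_iff₀ hτ] at hn
    exact H n t ht (by linarith)
  intro n
  induction n with
  | zero =>
    intro t ht hts
    simp only [Nat.cast_zero, zero_mul, add_zero] at hts
    linarith [ht.1]
  | succ n ih =>
    intro t ht htn
    rcases le_or_gt t (s + τ) with hle | hlt
    · exact hbase t ht hle
    · refine (hshift t ht hlt).trans (ih (t - τ) ⟨by linarith, by linarith [ht.2]⟩ ?_)
      push_cast at htn
      linarith

theorem sub_le_integral_sub_mul_integral {y y' h : ℝ → ℝ} {a r t : ℝ} (hrt : r ≤ t)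
    (hy : y t - y r = ∫ u in r..t, y' u) (hy'i : IntervalIntegrable y' volume r t)
    (hyi : IntervalIntegrable y volume r t) (hhi : IntervalIntegrable h volume r t)
    (hineq : ∀ᵐ u ∂volume.restrict (Ioo r t), y' u + a * y u ≤ h u) :
    y t - y r ≤ (∫ u in r..t, h u) - a * ∫ u in r..t, y u := by
  have hineq' : y' ≤ᵐ[volume.restrict (Icc r t)] fun u => h u - a * y u := by
    filter_upwards [(ae_restrict_congr_set Ioo_ae_eq_Icc).1 hineq] with u hu
    linarith
  calc y t - y r = ∫ u in r..t, y' u := hy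
    _ ≤ ∫ u in r..t, (h u - a * y u) :=
      integral_mono_ae_restrict hrt hy'i (hhi.sub (hyi.const_mul a)) hineq'
    _ = (∫ u in r..t, h u) - a * ∫ u in r..t, y u := by
      rw [intervalIntegral.integral_sub hhi (hyi.const_mul a), intervalIntegral.integral_const_mul]

theorem integral_le_of_forall_integral_window_le {h : ℝ → ℝ} {T τ b s t : ℝ} (hτT : τ < T)
    (hh_nonneg : ∀ u ∈ Ico 0 T, 0 ≤ h u) (hh_loc : LocallyIntegrableOn h (Ico 0 T))
    (hh_int : ∀ u ∈ Ico 0 (T - τ), (∫ v in u..(u + τ), h v) ≤ b)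
    (hs : 0 ≤ s) (hst : s ≤ t) (htT : t < T) (hlen : t - s ≤ τ) :
    ∫ u in s..t, h u ≤ b := by
  set r := max 0 (t - τ)
  have hr0 : 0 ≤ r := le_max_left _ _
  have hrt : t ≤ r + τ := by linarith [le_max_right 0 (t - τ)]
  have hrT : r < T - τ := max_lt (by linarith) (by linarith)
  have hnonneg : 0 ≤ᵐ[volume.restrict (Ioc r (r + τ))] h := by
    filter_upwards [ae_restrict_mem measurableSet_Ioc] with u hu
    exact hh_nonneg u ⟨hr0.trans hu.1.le, by linarith [hu.2]⟩
  have hint : IntervalIntegrable h volume r (r + τ) :=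
    hh_loc.intervalIntegrable <| by
      rw [uIcc_of_le (by linarith)]
      exact Icc_subset_Ico hr0 (by linarith)
  calc ∫ u in s..t, h u ≤ ∫ u in r..(r + τ), h u :=
        integral_mono_interval (max_le hs (by linarith)) hst hrt hnonneg hint
    _ ≤ b := hh_int r ⟨hr0, hrT⟩

theorem continuousOn_Icc_of_sub_eq_integral {T r t : ℝ} {y y' : ℝ → ℝ}
    (hy'_loc : LocallyIntegrableOn y' (Ico 0 T))
    (hy_ac : ∀ s ∈ Ico 0 T, ∀ t ∈ Ico 0 T, y t - y s = ∫ u in s..t, y' u)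
    (hr : 0 ≤ r) (hrt : r ≤ t) (htT : t < T) : ContinuousOn y (Icc r t) := by
  refine continuousOn_Icc_of_eq_add_integral (hy'_loc.intervalIntegrable ?_) fun u hu => ?_
  · rw [uIcc_of_le hrt]
    exact Icc_subset_Ico hr htT
  · linarith [hy_ac r ⟨hr, hrt.trans_lt htT⟩ u ⟨hr.trans hu.1, hu.2.trans_lt htT⟩]

theorem le_add_sub_of_forall_Ioc_lt {T τ a b L r t : ℝ} {y y' h : ℝ → ℝ} (hτT : τ < T)
    (ha : 0 ≤ a) (hy'_loc : LocallyIntegrableOn y' (Ico 0 T))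
    (hy_ac : ∀ s ∈ Ico 0 T, ∀ t ∈ Ico 0 T, y t - y s = ∫ u in s..t, y' u)
    (hderiv : ∀ᵐ u ∂volume.restrict (Ioo 0 T), y' u + a * y u ≤ h u)
    (hh_nonneg : ∀ u ∈ Ico 0 T, 0 ≤ h u) (hh_loc : LocallyIntegrableOn h (Ico 0 T))
    (hh_int : ∀ u ∈ Ico 0 (T - τ), (∫ v in u..(u + τ), h v) ≤ b)
    (hr : 0 ≤ r) (hrt : r ≤ t) (htT : t < T) (hlen : t - r ≤ τ)
    (hy_gt : ∀ u ∈ Ioc r t, L < y u) :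
    y t ≤ y r + b - a * ((t - r) * L) := by
  have hIco : uIcc r t ⊆ Ico 0 T := by
    rw [uIcc_of_le hrt]
    exact Icc_subset_Ico hr htT
  have hyi : IntervalIntegrable y volume r t :=
    (continuousOn_Icc_of_sub_eq_integral hy'_loc hy_ac hr hrt htT).intervalIntegrable_of_Icc hrt
  have hdiff := sub_le_integral_sub_mul_integral hrt
    (hy_ac r ⟨hr, hrt.trans_lt htT⟩ t ⟨hr.trans hrt, htT⟩)
    (hy'_loc.intervalIntegrable hIco) hyi (hh_loc.intervalIntegrable hIco)
    (ae_restrict_of_ae_restrict_of_subset (Ioo_subset_Ioo hr htT.le) hderiv)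
  have hwin := integral_le_of_forall_integral_window_le hτT hh_nonneg hh_loc hh_int hr hrt htT hlen
  have hlow : (t - r) * L ≤ ∫ u in r..t, y u := by
    have := integral_mono_on_of_le_Ioo hrt intervalIntegrable_const hyi
      fun u hu => (hy_gt u (Ioo_subset_Ioc_self hu)).le
    rwa [intervalIntegral.integral_const, smul_eq_mul] at this
  linarith [mul_le_mul_of_nonneg_left hlow ha]

theorem stmt0_general (T τ a b : ℝ) (hτ : τ ∈ Set.Ioo 0 T)
    (ha : 0 < a) (hb : 0 < b)
    (y y' h : ℝ → ℝ)
    (hy'_loc : MeasureTheory.LocallyIntegrableOn y' (Set.Ico 0 T))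
    (hy_ac : ∀ s ∈ Set.Ico (0:ℝ) T, ∀ t ∈ Set.Ico (0:ℝ) T,
      y t - y s = ∫ u in s..t, y' u)
    (hderiv : ∀ᵐ t ∂(MeasureTheory.volume.restrict (Set.Ioo (0:ℝ) T)),
      y' t + a * y t ≤ h t)
    (hh_nonneg : ∀ t ∈ Set.Ico (0:ℝ) T, 0 ≤ h t)
    (hh_loc : MeasureTheory.LocallyIntegrableOn h (Set.Ico 0 T))
    (hh_int : ∀ t ∈ Set.Ico (0:ℝ) (T - τ), (∫ s in t..(t + τ), h s) ≤ b) :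
    ∀ t ∈ Set.Ico (0:ℝ) T, y t ≤ max (y 0 + b) (b / (a * τ) + 2 * b) := by
  intro t₁ ht₁
  obtain ⟨hτ0, hτT⟩ := hτ
  set M := max (y 0 + b) (b / (a * τ) + 2 * b)
  have haτ : 0 < a * τ := mul_pos ha hτ0
  have hM₁ : y 0 + b ≤ M := le_max_left _ _
  have hM₂ : b / (a * τ) + 2 * b ≤ M := le_max_right _ _
  have hLpos : 0 < M - b := by linarith [div_pos hb haτ]
  have habsorb : b ≤ a * τ * (M - b) :=
    calc b = a * τ * (b / (a * τ)) := (mul_div_cancel₀ _ haτ.ne').symm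
      _ ≤ a * τ * (M - b) := by gcongr; linarith
  have step := fun {r t : ℝ} (hr : 0 ≤ r) (hrt : r ≤ t) (ht : t ≤ t₁) =>
    le_add_sub_of_forall_Ioc_lt (L := M - b) hτT ha.le hy'_loc hy_ac hderiv hh_nonneg hh_loc
      hh_int hr hrt (ht.trans_lt ht₁.2)
  have hy_cont := continuousOn_Icc_of_sub_eq_integral hy'_loc hy_ac le_rfl ht₁.1 ht₁.2
  obtain ⟨s₁, hs₁, hys₁, hy_gt⟩ :=
    hy_cont.exists_mem_Icc_forall_Ioc_lt ht₁.1 (show y 0 ≤ M - b by linarith)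
  rcases hs₁.2.eq_or_lt with rfl | hlt
  · linarith
  refine forall_mem_Ioc_le_of_le_shift hτ0 (fun t ht hts => ?_) (fun t ht hts => ?_) t₁
    ⟨hlt, le_rfl⟩
  · have := step hs₁.1 ht.1.le ht.2 (by linarith) fun u hu => hy_gt u ⟨hu.1, hu.2.trans ht.2⟩
    linarith [mul_nonneg ha.le (mul_nonneg (sub_nonneg.2 ht.1.le) hLpos.le)]
  · have := step (r := t - τ) (by linarith [hs₁.1]) (by linarith) ht.2 (by linarith)
      fun u hu => hy_gt u ⟨by linarith [hu.1], hu.2.trans ht.2⟩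
    linarith [show a * ((t - (t - τ)) * (M - b)) = a * τ * (M - b) by ring]

/-- Absorption lemma for differential inequalities: if `y : [0,T) → [0,∞)` is absolutely
continuous (encoded via a locally integrable a.e. derivative `y'` and the fundamental
theorem of calculus representation) with `y' + a·y ≤ h` a.e. on `(0,T)`, where `h ≥ 0` is
locally integrable with `∫_t^{t+τ} h ≤ b` for all `t ∈ [0, T-τ)`, then
`y(t) ≤ max{y(0)+b, b/(aτ)+2b}` on `[0,T)`. -/
theorem stmt0 (T τ a b : ℝ) (hT : 0 < T) (hτ : τ ∈ Set.Ioo 0 T)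
    (ha : 0 < a) (hb : 0 < b)
    (y y' h : ℝ → ℝ)
    (hy_nonneg : ∀ t ∈ Set.Ico (0:ℝ) T, 0 ≤ y t)
    (hy'_loc : MeasureTheory.LocallyIntegrableOn y' (Set.Ico 0 T))
    (hy_ac : ∀ s ∈ Set.Ico (0:ℝ) T, ∀ t ∈ Set.Ico (0:ℝ) T,
      y t - y s = ∫ u in s..t, y' u)
    (hderiv : ∀ᵐ t ∂(MeasureTheory.volume.restrict (Set.Ioo (0:ℝ) T)),
      y' t + a * y t ≤ h t)
    (hh_nonneg : ∀ t ∈ Set.Ico (0:ℝ) T, 0 ≤ h t)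
    (hh_loc : MeasureTheory.LocallyIntegrableOn h (Set.Ico 0 T))
    (hh_int : ∀ t ∈ Set.Ico (0:ℝ) (T - τ), (∫ s in t..(t + τ), h s) ≤ b) :
    ∀ t ∈ Set.Ico (0:ℝ) T, y t ≤ max (y 0 + b) (b / (a * τ) + 2 * b) :=
  stmt0_general T τ a b hτ ha hb y y' h hy'_loc hy_ac hderiv hh_nonneg hh_loc hh_int
end

section
/- Let ϖ₁, ϖ₂, a₂, b₁, λ, k, l, δ be real numbers with a₂, b₁, λ, k, l, δ > 0, ϖ₁ > 0, ϖ₁ϖ₂ > a₂b₁, and δ·(b₁l²ϖ₁ + a₂k²ϖ₂ − 2a₂b₁kl) < 4λa₂(ϖ₁ϖ₂ − a₂b₁). Then the real symmetric 3×3 matrix P with rows (ϖ₁, a₂, −kδ/2), (a₂, a₂ϖ₂/b₁, −lδ/2), (−kδ/2, −lδ/2, λδ) is positive definite. -/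
/-!
Sylvester's criterion in dimension three, by completing the square twice: with `m = ad - b²` the
second leading minor and `Δ` the determinant, the form `Q` of `!![a, b, c; b, d, e; c, e, f]`
satisfies `a m Q = m (ax + by + cz)² + (my + (ae - bc)z)² + a Δ z²`. For `P` the second minor is
`a₂(ϖ₁ϖ₂ - a₂b₁)/b₁` and the determinant is `δ/(4b₁)` times the gap in the last hypothesis.
-/

open Matrix

theorem mul_mul_quadForm_three_eq (a b c d e f x y z : ℝ) :
    a * (a * d - b ^ 2) * (a * x ^ 2 + d * y ^ 2 + f * z ^ 2 + 2 * b * x * y + 2 * c * x * z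
        + 2 * e * y * z) =
      (a * d - b ^ 2) * (a * x + b * y + c * z) ^ 2
        + ((a * d - b ^ 2) * y + (a * e - b * c) * z) ^ 2
        + a * (a * d * f + 2 * b * c * e - a * e ^ 2 - d * c ^ 2 - f * b ^ 2) * z ^ 2 := by
  ring

theorem quadForm_three_pos {a b c d e f x y z : ℝ} (ha : 0 < a) (hm : 0 < a * d - b ^ 2)
    (hΔ : 0 < a * d * f + 2 * b * c * e - a * e ^ 2 - d * c ^ 2 - f * b ^ 2)
    (hxyz : x ≠ 0 ∨ y ≠ 0 ∨ z ≠ 0) :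
    0 < a * x ^ 2 + d * y ^ 2 + f * z ^ 2 + 2 * b * x * y + 2 * c * x * z + 2 * e * y * z := by
  refine pos_of_mul_pos_right ?_ (mul_pos ha hm).le
  rw [mul_mul_quadForm_three_eq]
  by_cases hz : z = 0
  · subst hz
    by_cases hy : y = 0
    · subst hy
      have hx : x ≠ 0 := by simpa using hxyz
      simp only [mul_zero, add_zero, ne_eq, OfNat.ofNat_ne_zero, not_false_eq_true, zero_pow]
      positivity
    · simp only [mul_zero, add_zero, ne_eq, OfNat.ofNat_ne_zero, not_false_eq_true, zero_pow]
      positivity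
  · positivity

theorem posDef_fin_three_of_minors_pos {a b c d e f : ℝ} (ha : 0 < a) (hm : 0 < a * d - b ^ 2)
    (hdet : 0 < (!![a, b, c; b, d, e; c, e, f] : Matrix (Fin 3) (Fin 3) ℝ).det) :
    (!![a, b, c; b, d, e; c, e, f] : Matrix (Fin 3) (Fin 3) ℝ).PosDef := by
  have hΔ : 0 < a * d * f + 2 * b * c * e - a * e ^ 2 - d * c ^ 2 - f * b ^ 2 := by
    simp only [det_fin_three, Fin.isValue, of_apply, cons_val', cons_val_zero, cons_val_fin_one,
      cons_val_one, cons_val, sub_pos] at hdet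
    linarith
  rw [posDef_iff_dotProduct_mulVec]
  refine ⟨?_, fun v hv => ?_⟩
  · ext i j
    fin_cases i <;> fin_cases j <;> rfl
  · have hv' : v 0 ≠ 0 ∨ v 1 ≠ 0 ∨ v 2 ≠ 0 := by
      by_contra! h
      exact hv (by ext i; fin_cases i <;> simp [h.1, h.2.1, h.2.2])
    have hQ := quadForm_three_pos ha hm hΔ hv'
    simp only [dotProduct, Pi.star_apply, star_trivial, mulVec, of_apply, cons_val',
      cons_val_fin_one, Fin.sum_univ_three, Fin.isValue, cons_val_zero, cons_val_one, cons_val]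
    linarith

theorem stmt10_general (ϖ₁ ϖ₂ a₂ b₁ lam k l δ : ℝ)
    (ha₂ : 0 < a₂) (hb₁ : 0 < b₁) (hδ : 0 < δ) (hϖ₁ : 0 < ϖ₁) (hprod : ϖ₁ * ϖ₂ > a₂ * b₁)
    (hdet : δ * (b₁ * l ^ 2 * ϖ₁ + a₂ * k ^ 2 * ϖ₂ - 2 * a₂ * b₁ * k * l)
      < 4 * lam * a₂ * (ϖ₁ * ϖ₂ - a₂ * b₁)) :
    (!![ϖ₁, a₂, -(k * δ) / 2;
        a₂, a₂ * ϖ₂ / b₁, -(l * δ) / 2;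
        -(k * δ) / 2, -(l * δ) / 2, lam * δ] : Matrix (Fin 3) (Fin 3) ℝ).PosDef := by
  refine posDef_fin_three_of_minors_pos hϖ₁ ?_ ?_
  · have h : ϖ₁ * (a₂ * ϖ₂ / b₁) - a₂ ^ 2 = a₂ * (ϖ₁ * ϖ₂ - a₂ * b₁) / b₁ := by
      field_simp
    rw [h]
    have hgap := sub_pos.2 hprod
    positivity
  · have h : (!![ϖ₁, a₂, -(k * δ) / 2; a₂, a₂ * ϖ₂ / b₁, -(l * δ) / 2;
        -(k * δ) / 2, -(l * δ) / 2, lam * δ] : Matrix (Fin 3) (Fin 3) ℝ).det =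
        δ / (4 * b₁) * (4 * lam * a₂ * (ϖ₁ * ϖ₂ - a₂ * b₁)
          - δ * (b₁ * l ^ 2 * ϖ₁ + a₂ * k ^ 2 * ϖ₂ - 2 * a₂ * b₁ * k * l)) := by
      rw [det_fin_three]
      simp only [Fin.isValue, of_apply, cons_val', cons_val_zero, cons_val_fin_one, cons_val_one,
        cons_val]
      field_simp
      ring
    rw [h]
    have hgap := sub_pos.2 hdet
    positivity

/-- The matrix `P` of the Lyapunov functional estimate is positive definite under the
conditions `ϖ₁ > 0`, `ϖ₁ϖ₂ > a₂b₁` and `δ(b₁l²ϖ₁ + a₂k²ϖ₂ − 2a₂b₁kl) < 4λa₂(ϖ₁ϖ₂ − a₂b₁)`. -/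
theorem stmt10 (ϖ₁ ϖ₂ a₂ b₁ lam k l δ : ℝ)
    (ha₂ : 0 < a₂) (hb₁ : 0 < b₁) (hlam : 0 < lam) (hk : 0 < k) (hl : 0 < l)
    (hδ : 0 < δ) (hϖ₁ : 0 < ϖ₁) (hprod : ϖ₁ * ϖ₂ > a₂ * b₁)
    (hdet : δ * (b₁ * l ^ 2 * ϖ₁ + a₂ * k ^ 2 * ϖ₂ - 2 * a₂ * b₁ * k * l)
      < 4 * lam * a₂ * (ϖ₁ * ϖ₂ - a₂ * b₁)) :
    (!![ϖ₁, a₂, -(k * δ) / 2;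
        a₂, a₂ * ϖ₂ / b₁, -(l * δ) / 2;
        -(k * δ) / 2, -(l * δ) / 2, lam * δ] : Matrix (Fin 3) (Fin 3) ℝ).PosDef :=
  stmt10_general ϖ₁ ϖ₂ a₂ b₁ lam k l δ ha₂ hb₁ hδ hϖ₁ hprod hdet
end

section
/- Fix positive real numbers a₀, a₂, a₃, a₄, b₀, b₁, b₃, b₄, M, d₁, d₂, d₃, χ₁, χ₂, λ, k, l. For a₁, b₂ > 0 with D(a₁, b₂) := (b₂ + b₄M)(a₁ + a₃M) − (a₂ + a₄M)(b₁ + b₃M) > 0, define u*(a₁, b₂) := (a₀(b₂ + b₄M) − b₀(a₂ + a₄M))/D(a₁, b₂) and v*(a₁, b₂) := (b₀(a₁ + a₃M) − a₀(b₁ + b₃M))/D(a₁, b₂). Then u*(a₁, b₂) → 0 and v*(a₁, b₂) → 0 as a₁ → ∞ and b₂ → ∞ jointly, and there exists A > 0 such that for all a₁ ≥ A and b₂ ≥ A the following hold: (b₁ + b₃M)/(a₁ + a₃M) < b₀/a₀ < (b₂ + b₄M)/(a₂ + a₄M), b₁l²ϖ₁ + a₂k²ϖ₂ > 2a₂b₁kl,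 and ϖ₁ϖ₂ > a₂b₁ + (b₁l²ϖ₁ + a₂k²ϖ₂ − 2a₂b₁kl)·ϖ₃, where ϖ₁ := a₁ − a₄M − b₃M, ϖ₂ := b₂ − a₄M − b₃M, and ϖ₃ := (d₁a₂χ₂²·v*(a₁, b₂) + d₂b₁χ₁²·u*(a₁, b₂))/(16d₁d₂d₃a₂b₁λ). -/
/-!
As `a₁, b₂ → ∞`, the determinant `D` grows like `a₁ b₂` while the numerators of `u*` and `v*`
grow only like `b₂` and `a₁`, so both coordinates of the equilibrium tend to `0`, and with them
`ϖ₃`. In the weak competition condition the left side tends to `0` and the right side to `+∞`;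
the left side of the first structural condition tends to `+∞`. For the second one, once `ϖ₃ ≤ 1`
its right-hand side is at most `a₂b₁ + b₁l²ϖ₁ + a₂k²ϖ₂`, and
`ϖ₁ϖ₂ - b₁l²ϖ₁ - a₂k²ϖ₂ = (ϖ₁ - a₂k²)(ϖ₂ - b₁l²) - a₂k²b₁l²` tends to `+∞`.
-/

open Filter Topology

/-- Determinant `D(a₁,b₂)` of the equilibrium system, as a function of the local
intraspecific competition strengths `a₁` and `b₂`. -/
noncomputable def eqD (a₂ a₃ a₄ b₁ b₃ b₄ M a₁ b₂ : ℝ) : ℝ :=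
  (b₂ + b₄ * M) * (a₁ + a₃ * M) - (a₂ + a₄ * M) * (b₁ + b₃ * M)

/-- First coordinate `u*(a₁,b₂)` of the positive constant equilibrium. -/
noncomputable def eqUStar (a₀ a₂ a₃ a₄ b₀ b₁ b₃ b₄ M a₁ b₂ : ℝ) : ℝ :=
  (a₀ * (b₂ + b₄ * M) - b₀ * (a₂ + a₄ * M)) / eqD a₂ a₃ a₄ b₁ b₃ b₄ M a₁ b₂

/-- Second coordinate `v*(a₁,b₂)` of the positive constant equilibrium. -/
noncomputable def eqVStar (a₀ a₂ a₃ a₄ b₀ b₁ b₃ b₄ M a₁ b₂ : ℝ) : ℝ :=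
  (b₀ * (a₁ + a₃ * M) - a₀ * (b₁ + b₃ * M)) / eqD a₂ a₃ a₄ b₁ b₃ b₄ M a₁ b₂

theorem exists_gt_forall_of_eventually_atTop_prod {α : Type*} [LinearOrder α] [NoMaxOrder α]
    (c : α) {P : α → α → Prop} (h : ∀ᶠ z : α × α in atTop ×ˢ atTop, P z.1 z.2) :
    ∃ A, c < A ∧ ∀ a b, A ≤ a → A ≤ b → P a b := by
  have : Nonempty α := ⟨c⟩
  rw [prod_atTop_atTop_eq, eventually_atTop_prod_self] at h
  obtain ⟨A, hA⟩ := h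
  obtain ⟨B, hB⟩ := exists_gt (max A c)
  exact ⟨B, (le_max_right A c).trans_lt hB, fun a b ha hb =>
    hA a b ((le_max_left A c).trans (hB.le.trans ha)) ((le_max_left A c).trans (hB.le.trans hb))⟩

section
variable {ι : Type*} {l : Filter ι} {x y : ι → ℝ}

theorem tendsto_sub_div_mul_sub_nhds_zero (hx : Tendsto x l atTop) (hy : Tendsto y l atTop)
    (p q r : ℝ) : Tendsto (fun i => (p * y i - q) / (y i * x i - r)) l (𝓝 0) := by
  have hnum : Tendsto (fun i => p - q / y i) l (𝓝 (p - 0)) :=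
    tendsto_const_nhds.sub (tendsto_const_nhds.div_atTop hy)
  have hden : Tendsto (fun i => x i + -(r / y i)) l atTop :=
    hx.atTop_add (tendsto_const_nhds.div_atTop hy).neg
  refine (hnum.div_atTop hden).congr' ?_
  filter_upwards [hy.eventually_gt_atTop 0] with i hi
  rw [← mul_div_mul_right _ _ hi.ne']
  congr 1
  · field_simp
  · field_simp
    ring

theorem add_mul_lt_mul_of_lt_sub_mul_sub {w₁ w₂ p q r s t : ℝ} (hr : 0 ≤ r)
    (hS : 0 ≤ p * w₁ + q * w₂ - r) (ht : t ≤ 1) (h : s + q * p < (w₁ - q) * (w₂ - p)) :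
    s + (p * w₁ + q * w₂ - r) * t < w₁ * w₂ := by
  nlinarith [mul_le_mul_of_nonneg_left ht hS]

theorem eventually_add_mul_lt_mul (hx : Tendsto x l atTop) (hy : Tendsto y l atTop)
    {t : ι → ℝ} (ht : Tendsto t l (𝓝 0)) {p q r : ℝ} (hp : 0 < p) (hq : 0 < q) (hr : 0 ≤ r)
    (s : ℝ) : ∀ᶠ i in l, s + (p * x i + q * y i - r) * t i < x i * y i := by
  have hS : ∀ᶠ i in l, r < p * x i + q * y i :=
    ((hx.const_mul_atTop hp).atTop_add_atTop (hy.const_mul_atTop hq)).eventually_gt_atTop r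
  have hprod : ∀ᶠ i in l, s + q * p < (x i - q) * (y i - p) :=
    ((tendsto_atTop_add_const_right _ (-q) hx).atTop_mul_atTop₀
      (tendsto_atTop_add_const_right _ (-p) hy)).eventually_gt_atTop _
  filter_upwards [hS, hprod, ht.eventually_le_const zero_lt_one] with i hSi hprodi hti
  exact add_mul_lt_mul_of_lt_sub_mul_sub hr (sub_nonneg.mpr hSi.le) hti hprodi

end

theorem tendsto_eqUStar (a₀ a₂ a₃ a₄ b₀ b₁ b₃ b₄ M : ℝ) :
    Tendsto (fun z : ℝ × ℝ => eqUStar a₀ a₂ a₃ a₄ b₀ b₁ b₃ b₄ M z.1 z.2)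
      (atTop ×ˢ atTop) (𝓝 0) :=
  tendsto_sub_div_mul_sub_nhds_zero (tendsto_atTop_add_const_right _ _ tendsto_fst)
    (tendsto_atTop_add_const_right _ _ tendsto_snd) _ _ _

theorem tendsto_eqVStar (a₀ a₂ a₃ a₄ b₀ b₁ b₃ b₄ M : ℝ) :
    Tendsto (fun z : ℝ × ℝ => eqVStar a₀ a₂ a₃ a₄ b₀ b₁ b₃ b₄ M z.1 z.2)
      (atTop ×ˢ atTop) (𝓝 0) := by
  simpa only [eqVStar, eqD, mul_comm (_ + b₄ * M)] using
    tendsto_sub_div_mul_sub_nhds_zero (tendsto_atTop_add_const_right _ (b₄ * M) tendsto_snd)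
      (tendsto_atTop_add_const_right _ (a₃ * M) tendsto_fst) b₀ (a₀ * (b₁ + b₃ * M))
      ((a₂ + a₄ * M) * (b₁ + b₃ * M))

theorem stmt16_general (a₀ a₂ a₃ a₄ b₀ b₁ b₃ b₄ M d₁ d₂ d₃ χ₁ χ₂ lam k l : ℝ)
    (ha₀ : 0 < a₀) (ha₂ : 0 < a₂) (ha₄ : 0 < a₄) (hb₀ : 0 < b₀) (hb₁ : 0 < b₁) (hM : 0 < M)
    (hk : 0 < k) (hl : 0 < l) :
    Tendsto (fun q : ℝ × ℝ => eqUStar a₀ a₂ a₃ a₄ b₀ b₁ b₃ b₄ M q.1 q.2)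
      (atTop ×ˢ atTop) (nhds 0) ∧
    Tendsto (fun q : ℝ × ℝ => eqVStar a₀ a₂ a₃ a₄ b₀ b₁ b₃ b₄ M q.1 q.2)
      (atTop ×ˢ atTop) (nhds 0) ∧
    ∃ A : ℝ, 0 < A ∧ ∀ a₁ b₂ : ℝ, A ≤ a₁ → A ≤ b₂ →
      ((b₁ + b₃ * M) / (a₁ + a₃ * M) < b₀ / a₀ ∧
        b₀ / a₀ < (b₂ + b₄ * M) / (a₂ + a₄ * M)) ∧
      (b₁ * l ^ 2 * (a₁ - a₄ * M - b₃ * M) + a₂ * k ^ 2 * (b₂ - a₄ * M - b₃ * M)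
        > 2 * a₂ * b₁ * k * l) ∧
      ((a₁ - a₄ * M - b₃ * M) * (b₂ - a₄ * M - b₃ * M)
        > a₂ * b₁
          + (b₁ * l ^ 2 * (a₁ - a₄ * M - b₃ * M)
              + a₂ * k ^ 2 * (b₂ - a₄ * M - b₃ * M) - 2 * a₂ * b₁ * k * l)
            * ((d₁ * a₂ * χ₂ ^ 2 * eqVStar a₀ a₂ a₃ a₄ b₀ b₁ b₃ b₄ M a₁ b₂
                + d₂ * b₁ * χ₁ ^ 2 * eqUStar a₀ a₂ a₃ a₄ b₀ b₁ b₃ b₄ M a₁ b₂)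
              / (16 * d₁ * d₂ * d₃ * a₂ * b₁ * lam))) := by
  have hu := tendsto_eqUStar a₀ a₂ a₃ a₄ b₀ b₁ b₃ b₄ M
  have hv := tendsto_eqVStar a₀ a₂ a₃ a₄ b₀ b₁ b₃ b₄ M
  refine ⟨hu, hv, exists_gt_forall_of_eventually_atTop_prod 0 ?_⟩
  have hϖ₁ : Tendsto (fun z : ℝ × ℝ => z.1 - a₄ * M - b₃ * M) (atTop ×ˢ atTop) atTop :=
    (tendsto_atTop_add_const_right _ (-(a₄ * M) - b₃ * M) tendsto_fst).congr fun z => by ring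
  have hϖ₂ : Tendsto (fun z : ℝ × ℝ => z.2 - a₄ * M - b₃ * M) (atTop ×ˢ atTop) atTop :=
    (tendsto_atTop_add_const_right _ (-(a₄ * M) - b₃ * M) tendsto_snd).congr fun z => by ring
  have hϖ₃ : Tendsto (fun z : ℝ × ℝ =>
      (d₁ * a₂ * χ₂ ^ 2 * eqVStar a₀ a₂ a₃ a₄ b₀ b₁ b₃ b₄ M z.1 z.2
        + d₂ * b₁ * χ₁ ^ 2 * eqUStar a₀ a₂ a₃ a₄ b₀ b₁ b₃ b₄ M z.1 z.2)
        / (16 * d₁ * d₂ * d₃ * a₂ * b₁ * lam)) (atTop ×ˢ atTop) (𝓝 0) := by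
    simpa using ((hv.const_mul _).add (hu.const_mul _)).div_const _
  have hweak₁ : ∀ᶠ z : ℝ × ℝ in atTop ×ˢ atTop, (b₁ + b₃ * M) / (z.1 + a₃ * M) < b₀ / a₀ :=
    (tendsto_const_nhds.div_atTop
      (tendsto_atTop_add_const_right _ _ tendsto_fst)).eventually_lt_const (by positivity)
  have hweak₂ : ∀ᶠ z : ℝ × ℝ in atTop ×ˢ atTop, b₀ / a₀ < (z.2 + b₄ * M) / (a₂ + a₄ * M) :=
    ((tendsto_atTop_add_const_right _ _ tendsto_snd).atTop_div_const
      (by positivity)).eventually_gt_atTop _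
  have hstruct₁ := ((hϖ₁.const_mul_atTop (by positivity : 0 < b₁ * l ^ 2)).atTop_add_atTop
    (hϖ₂.const_mul_atTop (by positivity : 0 < a₂ * k ^ 2))).eventually_gt_atTop
      (2 * a₂ * b₁ * k * l)
  have hstruct₂ := eventually_add_mul_lt_mul hϖ₁ hϖ₂ hϖ₃ (p := b₁ * l ^ 2) (q := a₂ * k ^ 2)
    (r := 2 * a₂ * b₁ * k * l) (by positivity) (by positivity) (by positivity) (a₂ * b₁)
  filter_upwards [hweak₁, hweak₂, hstruct₁, hstruct₂] with z h₁ h₂ h₃ h₄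
  exact ⟨⟨h₁, h₂⟩, h₃, h₄⟩

/-- As `a₁ → ∞` and `b₂ → ∞` jointly, `u*(a₁,b₂) → 0` and `v*(a₁,b₂) → 0`, and for all
sufficiently large `a₁, b₂` the weak competition condition and the two structural
conditions of the stabilization theorem hold. -/
theorem stmt16 (a₀ a₂ a₃ a₄ b₀ b₁ b₃ b₄ M d₁ d₂ d₃ χ₁ χ₂ lam k l : ℝ)
    (ha₀ : 0 < a₀) (ha₂ : 0 < a₂) (ha₃ : 0 < a₃) (ha₄ : 0 < a₄)
    (hb₀ : 0 < b₀) (hb₁ : 0 < b₁) (hb₃ : 0 < b₃) (hb₄ : 0 < b₄)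
    (hM : 0 < M) (hd₁ : 0 < d₁) (hd₂ : 0 < d₂) (hd₃ : 0 < d₃)
    (hχ₁ : 0 < χ₁) (hχ₂ : 0 < χ₂) (hlam : 0 < lam) (hk : 0 < k) (hl : 0 < l) :
    Tendsto (fun q : ℝ × ℝ => eqUStar a₀ a₂ a₃ a₄ b₀ b₁ b₃ b₄ M q.1 q.2)
      (atTop ×ˢ atTop) (nhds 0) ∧
    Tendsto (fun q : ℝ × ℝ => eqVStar a₀ a₂ a₃ a₄ b₀ b₁ b₃ b₄ M q.1 q.2)
      (atTop ×ˢ atTop) (nhds 0) ∧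
    ∃ A : ℝ, 0 < A ∧ ∀ a₁ b₂ : ℝ, A ≤ a₁ → A ≤ b₂ →
      ((b₁ + b₃ * M) / (a₁ + a₃ * M) < b₀ / a₀ ∧
        b₀ / a₀ < (b₂ + b₄ * M) / (a₂ + a₄ * M)) ∧
      (b₁ * l ^ 2 * (a₁ - a₄ * M - b₃ * M) + a₂ * k ^ 2 * (b₂ - a₄ * M - b₃ * M)
        > 2 * a₂ * b₁ * k * l) ∧
      ((a₁ - a₄ * M - b₃ * M) * (b₂ - a₄ * M - b₃ * M)
        > a₂ * b₁
          + (b₁ * l ^ 2 * (a₁ - a₄ * M - b₃ * M)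
              + a₂ * k ^ 2 * (b₂ - a₄ * M - b₃ * M) - 2 * a₂ * b₁ * k * l)
            * ((d₁ * a₂ * χ₂ ^ 2 * eqVStar a₀ a₂ a₃ a₄ b₀ b₁ b₃ b₄ M a₁ b₂
                + d₂ * b₁ * χ₁ ^ 2 * eqUStar a₀ a₂ a₃ a₄ b₀ b₁ b₃ b₄ M a₁ b₂)
              / (16 * d₁ * d₂ * d₃ * a₂ * b₁ * lam))) :=
  stmt16_general a₀ a₂ a₃ a₄ b₀ b₁ b₃ b₄ M d₁ d₂ d₃ χ₁ χ₂ lam k l ha₀ ha₂ ha₄ hb₀ hb₁ hM hk hl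
end
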